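/- arXiv:1201.0829 — 5 statements merged into one kernel-verified Lean document; each statement's English description precedes it below -/
import Mathlib

section
/- Let α ∈ (0,2) with α ≠ 1 and c > 0. Define p₀ : ℝ → ℝ by p₀(x) = 0 for x ≤ −1, p₀(x) = (x+1)/2 for −1 < x < 1, and p₀(x) = 1 for x ≥ 1. Then for every x ∈ (−1,1), the function u ↦ (p₀(x+u) − p₀(x) − 1_{|u|≤1}·(u/2))·c·|u|^{-(1+α)} is Lebesgue integrable on ℝ \ {0}, and ∫_{ℝ\{0}} (p₀(x+u) − p₀(x) − 1_{|u|≤1}·(u/2))·c·|u|^{-(1+α)} du = (c/(2α(1−α)))·((1−x)^{1−α} − (1+x)^{1−α}). -/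
open MeasureTheory

open Set in
private lemma tail_int {α M : ℝ} (hα : 0 < α) (hM : 0 < M) :
    IntegrableOn (fun u : ℝ => u ^ (-(1 + α))) (Ioi M) ∧
      ∫ u in Ioi M, u ^ (-(1 + α)) = M ^ (-α) / α := by
  have hlt : -(1 + α) < -1 := by linarith
  refine ⟨integrableOn_Ioi_rpow_of_lt hlt hM, ?_⟩
  rw [integral_Ioi_rpow_of_lt hlt hM, show -(1 + α) + 1 = -α by ring, neg_div_neg_eq]

open Set in
private lemma pos_side (α a : ℝ) (hα : 0 < α) (hα1 : α ≠ 1) (ha : 0 < a) :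
    IntegrableOn (fun u : ℝ => (min u a - if u ≤ 1 then u else 0) * u ^ (-(1 + α)))
        (Ioi 0) ∧
      ∫ u in Ioi 0, (min u a - if u ≤ 1 then u else 0) * u ^ (-(1 + α))
        = a ^ (1 - α) / (α * (1 - α)) - 1 / (1 - α) := by
  have hα0 : α ≠ 0 := ne_of_gt hα
  have h1α : (1 : ℝ) - α ≠ 0 := sub_ne_zero.2 fun h => hα1 h.symm
  have hrne : -(1 + α) ≠ -1 := by intro h; apply hα0; linarith
  have hr1ne : -(1 + α) + 1 ≠ -1 := by intro h; apply h1α; linarith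
  have hkey : a ^ (1 - α) = a * a ^ (-α) := by
    rw [show (1 : ℝ) - α = 1 + -α by ring, Real.rpow_add ha, Real.rpow_one]
  rcases le_or_gt a 1 with hc | hc
  · -- case a ≤ 1
    have h0mem : (0 : ℝ) ∉ uIcc a 1 := by
      rw [uIcc_of_le hc, mem_Icc]; push_neg; intro h; linarith
    have e0 : ∀ u ∈ Ioc (0 : ℝ) a, (min u a - if u ≤ 1 then u else 0) * u ^ (-(1 + α)) = 0 := by
      intro u hu
      rw [min_eq_left hu.2, if_pos (hu.2.trans hc)]; ring
    have emid : ∀ u ∈ Ioc a 1, (min u a - if u ≤ 1 then u else 0) * u ^ (-(1 + α))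
        = a * u ^ (-(1 + α)) - u ^ (-(1 + α) + 1) := by
      intro u hu
      have hu0 : u ≠ 0 := ne_of_gt (ha.trans hu.1)
      rw [min_eq_right hu.1.le, if_pos hu.2, Real.rpow_add_one hu0]; ring
    have etail : ∀ u ∈ Ioi (1 : ℝ),
        (min u a - if u ≤ 1 then u else 0) * u ^ (-(1 + α)) = a * u ^ (-(1 + α)) := by
      intro u hu
      rw [min_eq_right (hc.trans (le_of_lt hu)), if_neg (not_le.2 hu)]; ring
    have ii1 : IntervalIntegrable (fun u : ℝ => u ^ (-(1 + α))) volume a 1 :=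
      intervalIntegral.intervalIntegrable_rpow (Or.inr h0mem)
    have ii2 : IntervalIntegrable (fun u : ℝ => u ^ (-(1 + α) + 1)) volume a 1 :=
      intervalIntegral.intervalIntegrable_rpow (Or.inr h0mem)
    have I0 : IntegrableOn (fun u : ℝ => (min u a - if u ≤ 1 then u else 0) * u ^ (-(1 + α)))
        (Ioc 0 a) :=
      (integrableOn_zero).congr_fun (fun u hu => (e0 u hu).symm) measurableSet_Ioc
    have Imid : IntegrableOn (fun u : ℝ => (min u a - if u ≤ 1 then u else 0) * u ^ (-(1 + α)))
        (Ioc a 1) := by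
      have := ((ii1.const_mul a).sub ii2).1
      exact IntegrableOn.congr_fun this (fun u hu => (emid u hu).symm) measurableSet_Ioc
    have Itail : IntegrableOn (fun u : ℝ => (min u a - if u ≤ 1 then u else 0) * u ^ (-(1 + α)))
        (Ioi 1) :=
      IntegrableOn.congr_fun ((tail_int hα one_pos).1.const_mul a)
        (fun u hu => (etail u hu).symm) measurableSet_Ioi
    have IocU : Ioc (0 : ℝ) a ∪ Ioc a 1 = Ioc 0 1 := Ioc_union_Ioc_eq_Ioc ha.le hc
    have IoiU : Ioc (0 : ℝ) 1 ∪ Ioi 1 = Ioi 0 := Ioc_union_Ioi_eq_Ioi zero_le_one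
    have I01 : IntegrableOn (fun u : ℝ => (min u a - if u ≤ 1 then u else 0) * u ^ (-(1 + α)))
        (Ioc 0 1) := by rw [← IocU]; exact I0.union Imid
    refine ⟨by rw [← IoiU]; exact I01.union Itail, ?_⟩
    rw [← IoiU, setIntegral_union Ioc_disjoint_Ioi_same measurableSet_Ioi I01 Itail,
      ← IocU, setIntegral_union (Ioc_disjoint_Ioc_of_le le_rfl) measurableSet_Ioc I0 Imid]
    have v0 : ∫ u in Ioc (0 : ℝ) a, (min u a - if u ≤ 1 then u else 0) * u ^ (-(1 + α)) = 0 := by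
      rw [setIntegral_congr_fun measurableSet_Ioc e0]; simp
    have vmid : ∫ u in Ioc a 1, (min u a - if u ≤ 1 then u else 0) * u ^ (-(1 + α))
        = a * ((1 - a ^ (-(1 + α) + 1)) / (-(1 + α) + 1))
          - (1 - a ^ (-(1 + α) + 1 + 1)) / (-(1 + α) + 1 + 1) := by
      rw [setIntegral_congr_fun measurableSet_Ioc emid, ← intervalIntegral.integral_of_le hc,
        intervalIntegral.integral_sub (ii1.const_mul a) ii2,
        intervalIntegral.integral_const_mul, integral_rpow (Or.inr ⟨hrne, h0mem⟩),
        integral_rpow (Or.inr ⟨hr1ne, h0mem⟩), Real.one_rpow, Real.one_rpow]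
    have vtail : ∫ u in Ioi (1 : ℝ), (min u a - if u ≤ 1 then u else 0) * u ^ (-(1 + α))
        = a * ((1 : ℝ) ^ (-α) / α) := by
      rw [setIntegral_congr_fun measurableSet_Ioi etail, integral_const_mul,
        (tail_int hα one_pos).2]
    rw [v0, vmid, vtail, Real.one_rpow,
      show -(1 + α) + 1 = -α by ring, show -α + 1 = 1 - α by ring, hkey]
    have hnα : -α ≠ 0 := neg_ne_zero.2 hα0
    field_simp [hα0, h1α, hnα]
    ring
  · -- case 1 < a
    have h0mem : (0 : ℝ) ∉ uIcc 1 a := by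
      rw [uIcc_of_le hc.le, mem_Icc]; push_neg; intro h; linarith
    have e0 : ∀ u ∈ Ioc (0 : ℝ) 1, (min u a - if u ≤ 1 then u else 0) * u ^ (-(1 + α)) = 0 := by
      intro u hu
      rw [min_eq_left (hu.2.trans hc.le), if_pos hu.2]; ring
    have emid : ∀ u ∈ Ioc (1 : ℝ) a, (min u a - if u ≤ 1 then u else 0) * u ^ (-(1 + α))
        = u ^ (-(1 + α) + 1) := by
      intro u hu
      have hu0 : u ≠ 0 := ne_of_gt (zero_lt_one.trans hu.1)
      rw [min_eq_left hu.2, if_neg (not_le.2 hu.1), Real.rpow_add_one hu0]; ring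
    have etail : ∀ u ∈ Ioi a,
        (min u a - if u ≤ 1 then u else 0) * u ^ (-(1 + α)) = a * u ^ (-(1 + α)) := by
      intro u hu
      rw [min_eq_right (le_of_lt hu), if_neg (not_le.2 (hc.trans hu))]; ring
    have ii2 : IntervalIntegrable (fun u : ℝ => u ^ (-(1 + α) + 1)) volume 1 a :=
      intervalIntegral.intervalIntegrable_rpow (Or.inr h0mem)
    have I0 : IntegrableOn (fun u : ℝ => (min u a - if u ≤ 1 then u else 0) * u ^ (-(1 + α)))
        (Ioc 0 1) :=
      (integrableOn_zero).congr_fun (fun u hu => (e0 u hu).symm) measurableSet_Ioc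
    have Imid : IntegrableOn (fun u : ℝ => (min u a - if u ≤ 1 then u else 0) * u ^ (-(1 + α)))
        (Ioc 1 a) := by
      have := ii2.1
      exact IntegrableOn.congr_fun this (fun u hu => (emid u hu).symm) measurableSet_Ioc
    have Itail : IntegrableOn (fun u : ℝ => (min u a - if u ≤ 1 then u else 0) * u ^ (-(1 + α)))
        (Ioi a) :=
      IntegrableOn.congr_fun ((tail_int hα ha).1.const_mul a)
        (fun u hu => (etail u hu).symm) measurableSet_Ioi
    have IocU : Ioc (0 : ℝ) 1 ∪ Ioc 1 a = Ioc 0 a := Ioc_union_Ioc_eq_Ioc zero_le_one hc.le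
    have IoiU : Ioc (0 : ℝ) a ∪ Ioi a = Ioi 0 := Ioc_union_Ioi_eq_Ioi ha.le
    have I01 : IntegrableOn (fun u : ℝ => (min u a - if u ≤ 1 then u else 0) * u ^ (-(1 + α)))
        (Ioc 0 a) := by rw [← IocU]; exact I0.union Imid
    refine ⟨by rw [← IoiU]; exact I01.union Itail, ?_⟩
    rw [← IoiU, setIntegral_union Ioc_disjoint_Ioi_same measurableSet_Ioi I01 Itail,
      ← IocU, setIntegral_union (Ioc_disjoint_Ioc_of_le le_rfl) measurableSet_Ioc I0 Imid]
    have v0 : ∫ u in Ioc (0 : ℝ) 1, (min u a - if u ≤ 1 then u else 0) * u ^ (-(1 + α)) = 0 := by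
      rw [setIntegral_congr_fun measurableSet_Ioc e0]; simp
    have vmid : ∫ u in Ioc (1 : ℝ) a, (min u a - if u ≤ 1 then u else 0) * u ^ (-(1 + α))
        = (a ^ (-(1 + α) + 1 + 1) - 1) / (-(1 + α) + 1 + 1) := by
      rw [setIntegral_congr_fun measurableSet_Ioc emid, ← intervalIntegral.integral_of_le hc.le,
        integral_rpow (Or.inr ⟨hr1ne, h0mem⟩), Real.one_rpow]
    have vtail : ∫ u in Ioi a, (min u a - if u ≤ 1 then u else 0) * u ^ (-(1 + α))
        = a * (a ^ (-α) / α) := by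
      rw [setIntegral_congr_fun measurableSet_Ioi etail, integral_const_mul,
        (tail_int hα ha).2]
    rw [v0, vmid, vtail, show -(1 + α) + 1 + 1 = 1 - α by ring, hkey]
    field_simp
    ring

/-- Explicit evaluation of the nonlocal forcing term `g(x)` generated by the
leading-order escape probability `p₀` for `dX = dW + ε dL^α` from `(-1,1)` to `[1,∞)`. -/
theorem nonlocal_term_of_leading_order (α c : ℝ) (hα : 0 < α) (hα2 : α < 2)
    (hα1 : α ≠ 1) (hc : 0 < c) :
    let p₀ : ℝ → ℝ := fun x => if x ≤ -1 then 0 else if x < 1 then (x + 1) / 2 else 1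
    ∀ x ∈ Set.Ioo (-1 : ℝ) 1,
      Integrable
        (fun u => (p₀ (x + u) - p₀ x - (if |u| ≤ 1 then u / 2 else 0)) *
          (c * |u| ^ (-(1 + α)))) ((volume : Measure ℝ).restrict {(0 : ℝ)}ᶜ) ∧
      ∫ u in {(0 : ℝ)}ᶜ, (p₀ (x + u) - p₀ x - (if |u| ≤ 1 then u / 2 else 0)) *
          (c * |u| ^ (-(1 + α)))
        = (c / (2 * α * (1 - α))) * ((1 - x) ^ (1 - α) - (1 + x) ^ (1 - α)) := by
  intro p₀ x hx
  obtain ⟨hx1, hx2⟩ := hx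
  have hα0 : α ≠ 0 := ne_of_gt hα
  have h1α : (1 : ℝ) - α ≠ 0 := sub_ne_zero.2 fun h => hα1 h.symm
  have ha : (0 : ℝ) < 1 - x := by linarith
  have hb : (0 : ℝ) < 1 + x := by linarith
  set h : ℝ → ℝ := fun u => (p₀ (x + u) - p₀ x - (if |u| ≤ 1 then u / 2 else 0)) *
    (c * |u| ^ (-(1 + α))) with hh
  have E1 : ∀ u ∈ Set.Ioi (0 : ℝ),
      h u = (c / 2) * ((min u (1 - x) - if u ≤ 1 then u else 0) * u ^ (-(1 + α))) := by
    intro u hu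
    have hu0 : (0 : ℝ) < u := hu
    have habs : |u| = u := abs_of_pos hu0
    simp only [hh, p₀, habs]
    rw [if_neg (by linarith : ¬ (x + u ≤ -1)), if_neg (by linarith : ¬ (x ≤ -1)),
      if_pos hx2]
    rcases lt_or_ge u (1 - x) with hua | hua
    · rw [if_pos (by linarith : x + u < 1), min_eq_left hua.le]
      split_ifs <;> ring
    · rw [if_neg (by push_neg; linarith : ¬ (x + u < 1)), min_eq_right hua]
      split_ifs <;> ring
  have E2 : ∀ u ∈ Set.Ioi (0 : ℝ),
      h (-u) = -((c / 2) * ((min u (1 + x) - if u ≤ 1 then u else 0) * u ^ (-(1 + α)))) := by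
    intro u hu
    have hu0 : (0 : ℝ) < u := hu
    have habs : |(-u)| = u := by rw [abs_neg, abs_of_pos hu0]
    simp only [hh, p₀, habs]
    rw [if_neg (by linarith : ¬ (x ≤ -1)), if_pos hx2]
    rcases lt_or_ge u (1 + x) with hub | hub
    · rw [if_neg (by push_neg; linarith : ¬ (x + -u ≤ -1)),
        if_pos (by linarith : x + -u < 1), min_eq_left hub.le]
      split_ifs <;> ring
    · rw [if_pos (by linarith : x + -u ≤ -1), min_eq_right hub]
      split_ifs <;> ring
  have Pa := pos_side α (1 - x) hα hα1 ha
  have Pb := pos_side α (1 + x) hα hα1 hb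
  -- integrability on positive side
  have Ipos : IntegrableOn h (Set.Ioi 0) :=
    IntegrableOn.congr_fun (Pa.1.const_mul (c / 2)) (fun u hu => (E1 u hu).symm) measurableSet_Ioi
  -- integrability of reflected function on positive side
  have Inegrefl : IntegrableOn (fun u => h (-u)) (Set.Ioi 0) :=
    IntegrableOn.congr_fun ((Pb.1.const_mul (c / 2)).neg)
      (fun u hu => (E2 u hu).symm) measurableSet_Ioi
  have InegrefI : IntegrableOn (fun u => h (-u)) (Set.Ici 0) :=
    (integrableOn_Ici_iff_integrableOn_Ioi).mpr Inegrefl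
  have Ineg : IntegrableOn h (Set.Iic 0) := by
    have m : MeasurableEmbedding fun x : ℝ => -x := (Homeomorph.neg ℝ).measurableEmbedding
    have : IntegrableOn h (Set.Iic 0) (Measure.map (fun x : ℝ => -x) volume) := by
      rw [m.integrableOn_map_iff]
      simpa [Function.comp_def, Set.neg_preimage, Set.neg_Iic, neg_zero] using InegrefI
    rwa [Measure.map_neg_eq_self (volume : Measure ℝ)] at this
  rw [MeasureTheory.restrict_compl_singleton]
  constructor
  · rw [← integrableOn_univ, ← Set.Iic_union_Ioi (a := (0 : ℝ))]
    exact Ineg.union Ipos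
  · rw [← intervalIntegral.integral_Iic_add_Ioi Ineg Ipos]
    have vpos : ∫ u in Set.Ioi (0 : ℝ), h u
        = (c / 2) * ((1 - x) ^ (1 - α) / (α * (1 - α)) - 1 / (1 - α)) := by
      rw [setIntegral_congr_fun measurableSet_Ioi E1, integral_const_mul, Pa.2]
    have vneg : ∫ u in Set.Iic (0 : ℝ), h u
        = -((c / 2) * ((1 + x) ^ (1 - α) / (α * (1 - α)) - 1 / (1 - α))) := by
      rw [← neg_zero, ← integral_comp_neg_Ioi,
        setIntegral_congr_fun measurableSet_Ioi E2, integral_neg, integral_const_mul, Pb.2]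
    rw [vpos, vneg]
    field_simp
    ring
end

section
/- Let α ∈ (0,2) with α ≠ 1 and c > 0. Define p₀ : ℝ → ℝ by p₀(x) = 0 for x ≤ −1, p₀(x) = (x+1)/2 for −1 < x < 1, p₀(x) = 1 for x ≥ 1, and set g(x) = ∫_{ℝ\{0}} (p₀(x+u) − p₀(x) − 1_{|u|≤1}·(u/2))·c·|u|^{-(1+α)} du for x ∈ (−1,1). Define p₁ : [−1,1] → ℝ by p₁(x) = (c/((−α)(1−α)(2−α)(3−α)))·[(1−x)^{3−α} − 2^{3−α} + (3−α)·2^{2−α}·(x+1) − (1+x)^{3−α}] − ((x+1)/2)·(c/((−α)(2−α)(3−α)))·2^{3−α} + (x+1)/2. Then p₁(−1) = 0, p₁(1) = 1, p₁ is twice differentiable on (−1,1), and for every x ∈ (−1,1): (1/2)·p₁''(x) + g(x) = 0. -/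
open MeasureTheory Set Filter Topology

/-!
Since `p₀` is affine on `[-1, 1]` with slope `1/2`, the compensated increment
`p₀ (x + u) - p₀ x - u/2` vanishes for small `|u|`, so the nonlocal term is an absolutely
convergent integral. Pairing `u` with `-u` leaves
`∫₀^∞ ((u - (1 + x))⁺ - (u - (1 - x))⁺) / 2 · c u^(-1-α) du
  = c ((1 - x)^(1-α) - (1 + x)^(1-α)) / (2α(1-α))`.
Up to an affine function, `p₁` is `K ((1 - x)^(3-α) - (1 + x)^(3-α))`, whose second
derivative is `K (3-α)(2-α) ((1 - x)^(1-α) - (1 + x)^(1-α))`; the constant `K` is chosen so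
that the two cancel, and the affine part fixes the boundary values.
-/

section RampIntegral

variable {α a b : ℝ}

lemma hasDerivAt_antideriv_sub_mul_rpow (hα : α ≠ 0) (hα1 : α ≠ 1) {u : ℝ} (hu : 0 < u) :
    HasDerivAt (fun v => v ^ (1 - α) / (1 - α) + a * v ^ (-α) / α)
      ((u - a) * u ^ (-1 - α)) u := by
  have h1α : 1 - α ≠ 0 := sub_ne_zero.mpr (Ne.symm hα1)
  have h := ((Real.hasDerivAt_rpow_const (p := 1 - α) (Or.inl hu.ne')).div_const (1 - α)).add
    (((Real.hasDerivAt_rpow_const (p := -α) (Or.inl hu.ne')).const_mul a).div_const α)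
  refine h.congr_deriv ?_
  rw [show 1 - α - 1 = -α by ring, show -α - 1 = -1 - α by ring,
    show -α = 1 + (-1 - α) by ring, Real.rpow_add hu, Real.rpow_one]
  field_simp
  ring

lemma integral_Ioi_max_sub_max_mul_rpow_of_le (hα : 0 < α) (hα1 : α ≠ 1) (ha : 0 < a)
    (hab : a ≤ b) :
    ∫ u in Ioi 0, (max (u - a) 0 - max (u - b) 0) * u ^ (-1 - α)
      = (b ^ (1 - α) - a ^ (1 - α)) / (α * (1 - α)) := by
  set k : ℝ → ℝ := fun u => (max (u - a) 0 - max (u - b) 0) * u ^ (-1 - α)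
  have hb : 0 < b := ha.trans_le hab
  have hk_mid : EqOn k (fun u => (u - a) * u ^ (-1 - α)) (uIcc a b) := by
    intro u hu
    rw [uIcc_of_le hab] at hu
    simp only [k, max_eq_left (sub_nonneg.mpr hu.1), max_eq_right (sub_nonpos.mpr hu.2),
      sub_zero]
  have hk_Ioi : EqOn k (fun u => (b - a) * u ^ (-1 - α)) (Ioi b) := by
    intro u hu
    have hu : b < u := hu
    simp only [k, max_eq_left (sub_nonneg.mpr (hab.trans hu.le)),
      max_eq_left (sub_nonneg.mpr hu.le)]
    ring
  have hcont : ContinuousOn (fun u => (u - a) * u ^ (-1 - α)) (uIcc a b) := by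
    refine (continuousOn_id.sub continuousOn_const).mul
      (continuousOn_id.rpow_const fun u hu => Or.inl ?_)
    rw [uIcc_of_le hab] at hu
    exact (ha.trans_le hu.1).ne'
  have hint_Ioi : IntegrableOn k (Ioi b) :=
    IntegrableOn.congr_fun ((integrableOn_Ioi_rpow_of_lt (a := -1 - α) (by linarith) hb).const_mul
      (b - a)) hk_Ioi.symm measurableSet_Ioi
  have hvanish : ∀ u ∈ Ioi 0 \ Ioi a, k u = 0 := by
    rintro u ⟨-, hu⟩
    have hu : u ≤ a := not_lt.mp hu
    simp only [k, max_eq_right (sub_nonpos.mpr hu), max_eq_right (sub_nonpos.mpr (hu.trans hab)),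
      sub_zero, zero_mul]
  have hFTC : ∫ u in a..b, k u = (b ^ (1 - α) / (1 - α) + a * b ^ (-α) / α)
      - (a ^ (1 - α) / (1 - α) + a * a ^ (-α) / α) := by
    rw [intervalIntegral.integral_congr hk_mid]
    refine intervalIntegral.integral_eq_sub_of_hasDerivAt
      (f := fun v => v ^ (1 - α) / (1 - α) + a * v ^ (-α) / α) (fun u hu => ?_)
      hcont.intervalIntegrable
    rw [uIcc_of_le hab] at hu
    exact hasDerivAt_antideriv_sub_mul_rpow hα.ne' hα1 (ha.trans_le hu.1)
  rw [setIntegral_eq_of_subset_of_forall_sdiff_eq_zero measurableSet_Ioi (Ioi_subset_Ioi ha.le)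
    hvanish, ← intervalIntegral.integral_interval_add_Ioi' (hcont.congr hk_mid).intervalIntegrable
    hint_Ioi,
    hFTC, setIntegral_congr_fun measurableSet_Ioi hk_Ioi, integral_const_mul,
    integral_Ioi_rpow_of_lt (by linarith) hb]
  have h1α : 1 - α ≠ 0 := sub_ne_zero.mpr (Ne.symm hα1)
  have hpow : ∀ {t : ℝ}, 0 < t → t ^ (-α) = t ^ (1 - α) / t := fun ht => by
    rw [← Real.rpow_sub_one ht.ne', sub_sub_cancel_left]
  rw [show -1 - α + 1 = -α by ring, hpow ha, hpow hb]
  field_simp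
  ring

lemma integral_Ioi_max_sub_max_mul_rpow (hα : 0 < α) (hα1 : α ≠ 1) (ha : 0 < a) (hb : 0 < b) :
    ∫ u in Ioi 0, (max (u - a) 0 - max (u - b) 0) * u ^ (-1 - α)
      = (b ^ (1 - α) - a ^ (1 - α)) / (α * (1 - α)) := by
  rcases le_total a b with hab | hba
  · exact integral_Ioi_max_sub_max_mul_rpow_of_le hα hα1 ha hab
  · rw [← neg_sub (a ^ (1 - α)), neg_div,
      ← integral_Ioi_max_sub_max_mul_rpow_of_le hα hα1 hb hba, ← integral_neg]
    congr 1
    funext u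
    ring

end RampIntegral

lemma integrable_of_eq_zero_of_abs_le_rpow {f : ℝ → ℝ} {C r s : ℝ}
    (hf : AEStronglyMeasurable f) (hr : 0 < r) (hs : 1 < s) (h0 : ∀ u, |u| < r → f u = 0)
    (hbd : ∀ u, r ≤ |u| → |f u| ≤ C * |u| ^ (-s)) : Integrable f := by
  have hC : 0 ≤ C := by
    have h := (abs_nonneg _).trans (hbd r (abs_of_pos hr).ge)
    exact nonneg_of_mul_nonneg_left h (Real.rpow_pos_of_pos (abs_pos.mpr hr.ne') _)
  refine ((integrable_one_add_norm (E := ℝ) (μ := volume) (r := s) (by simpa using hs)).const_mul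
    (C * ((1 + r) / r) ^ s)).mono' hf (ae_of_all _ fun u => ?_)
  rw [Real.norm_eq_abs, Real.norm_eq_abs]
  rcases lt_or_ge |u| r with hu | hu
  · rw [h0 u hu, abs_zero]
    positivity
  · have hlow : 0 < r / (1 + r) * (1 + |u|) := by positivity
    have hle : r / (1 + r) * (1 + |u|) ≤ |u| := by
      rw [div_mul_eq_mul_div, div_le_iff₀ (by positivity)]
      nlinarith
    calc |f u| ≤ C * |u| ^ (-s) := hbd u hu
      _ ≤ C * (r / (1 + r) * (1 + |u|)) ^ (-s) :=
        mul_le_mul_of_nonneg_left (Real.rpow_le_rpow_of_nonpos hlow hle (by linarith)) hC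
      _ = C * ((1 + r) / r) ^ s * (1 + |u|) ^ (-s) := by
        rw [Real.mul_rpow (by positivity) (by positivity), Real.rpow_neg (by positivity),
          ← Real.inv_rpow (by positivity), inv_div, mul_assoc]

lemma integral_compl_zero_eq_integral_Ioi_add_neg {f : ℝ → ℝ} (hf : Integrable f) :
    ∫ u in {0}ᶜ, f u = ∫ u in Ioi 0, (f u + f (-u)) := by
  rw [restrict_compl_singleton, ← intervalIntegral.integral_Iic_add_Ioi hf.integrableOn
    hf.integrableOn, ← neg_zero, ← integral_comp_neg_Ioi, neg_zero,
    ← integral_add (hf.comp_neg).integrableOn hf.integrableOn]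
  simp only [add_comm]

/-- `p₀`: the probability that Brownian motion started at `y` leaves `(-1, 1)` through `1`. -/
noncomputable def rightExitProb (y : ℝ) : ℝ :=
  if y ≤ -1 then 0 else if y < 1 then (y + 1) / 2 else 1

lemma rightExitProb_of_mem_Icc {y : ℝ} (hy : y ∈ Icc (-1) 1) :
    rightExitProb y = (y + 1) / 2 := by
  unfold rightExitProb
  split_ifs <;> linarith [hy.1, hy.2]

lemma rightExitProb_mem_Icc (y : ℝ) : rightExitProb y ∈ Icc 0 1 := by
  unfold rightExitProb
  split_ifs <;> constructor <;> linarith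

lemma measurable_rightExitProb : Measurable rightExitProb :=
  Measurable.ite (measurableSet_le measurable_id measurable_const) measurable_const <|
    Measurable.ite (measurableSet_lt measurable_id measurable_const) (by fun_prop) measurable_const

lemma rightExitProb_add_add_sub_sub_two_mul {x u : ℝ} (hx : x ∈ Ioo (-1) 1) (hu : 0 < u) :
    rightExitProb (x + u) + rightExitProb (x - u) - 2 * rightExitProb x
      = (max (u - (1 + x)) 0 - max (u - (1 - x)) 0) / 2 := by
  obtain ⟨hx1, hx2⟩ := hx
  unfold rightExitProb
  split_ifs <;> simp only [max_def] <;> split_ifs <;> linarith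

noncomputable def levyIncrement (x u : ℝ) : ℝ :=
  rightExitProb (x + u) - rightExitProb x - if |u| ≤ 1 then u / 2 else 0

lemma measurable_levyIncrement (x : ℝ) : Measurable (levyIncrement x) :=
  ((measurable_rightExitProb.comp (measurable_const_add x)).sub measurable_const).sub <|
    Measurable.ite (measurableSet_le (by fun_prop) measurable_const) (by fun_prop) measurable_const

lemma levyIncrement_eq_zero {x u : ℝ} (hx : x ∈ Ioo (-1) 1) (hu : |u| < min (1 - x) (1 + x)) :
    levyIncrement x u = 0 := by
  have hmin : min (1 - x) (1 + x) ≤ 1 := min_le_iff.mpr (by by_contra! h; linarith [h.1, h.2])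
  have hxu : x + u ∈ Icc (-1) 1 := by
    obtain ⟨hu₁, hu₂⟩ := abs_lt.mp hu
    constructor <;> linarith [min_le_left (1 - x) (1 + x), min_le_right (1 - x) (1 + x)]
  rw [levyIncrement, if_pos (hu.trans_le hmin).le, rightExitProb_of_mem_Icc hxu,
    rightExitProb_of_mem_Icc (Ioo_subset_Icc_self hx)]
  ring

lemma abs_levyIncrement_le (x u : ℝ) : |levyIncrement x u| ≤ 2 := by
  have h₁ := rightExitProb_mem_Icc (x + u)
  have h₂ := rightExitProb_mem_Icc x
  have h₃ : |(if |u| ≤ 1 then u / 2 else 0)| ≤ 1 := by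
    split_ifs with h
    · rw [abs_div, abs_two]; linarith
    · simp
  rw [levyIncrement]
  refine (abs_sub _ _).trans ?_
  have : |rightExitProb (x + u) - rightExitProb x| ≤ 1 :=
    abs_sub_le_iff.mpr ⟨by linarith [h₁.2, h₂.1], by linarith [h₁.1, h₂.2]⟩
  linarith

lemma levyIncrement_add_levyIncrement_neg {x u : ℝ} (hx : x ∈ Ioo (-1) 1) (hu : 0 < u) :
    levyIncrement x u + levyIncrement x (-u)
      = (max (u - (1 + x)) 0 - max (u - (1 - x)) 0) / 2 := by
  rw [← rightExitProb_add_add_sub_sub_two_mul hx hu, levyIncrement, levyIncrement, abs_neg,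
    ← sub_eq_add_neg]
  split_ifs <;> ring

lemma integrable_levyIncrement_mul_rpow {α x : ℝ} (hα : 0 < α) (hx : x ∈ Ioo (-1) 1) :
    Integrable fun u => levyIncrement x u * |u| ^ (-(1 + α)) := by
  refine integrable_of_eq_zero_of_abs_le_rpow (r := min (1 - x) (1 + x)) (s := 1 + α) (C := 2)
    ((measurable_levyIncrement x).mul (by fun_prop)).aestronglyMeasurable
    (lt_min (by linarith [hx.2]) (by linarith [hx.1])) (by linarith)
    (fun u hu => by rw [levyIncrement_eq_zero hx hu, zero_mul]) (fun u _ => ?_)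
  rw [abs_mul, abs_of_nonneg (Real.rpow_nonneg (abs_nonneg u) _)]
  exact mul_le_mul_of_nonneg_right (abs_levyIncrement_le x u) (Real.rpow_nonneg (abs_nonneg u) _)

lemma integral_levyIncrement_mul_rpow {α x : ℝ} (hα : 0 < α) (hα1 : α ≠ 1)
    (hx : x ∈ Ioo (-1) 1) :
    ∫ u in {0}ᶜ, levyIncrement x u * |u| ^ (-(1 + α))
      = ((1 - x) ^ (1 - α) - (1 + x) ^ (1 - α)) / (2 * (α * (1 - α))) := by
  rw [integral_compl_zero_eq_integral_Ioi_add_neg (integrable_levyIncrement_mul_rpow hα hx)]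
  have hsym : EqOn (fun u => levyIncrement x u * |u| ^ (-(1 + α))
      + levyIncrement x (-u) * |-u| ^ (-(1 + α)))
      (fun u => (max (u - (1 + x)) 0 - max (u - (1 - x)) 0) * u ^ (-1 - α) / 2) (Ioi 0) := by
    intro u (hu : 0 < u)
    simp only [abs_neg, abs_of_pos hu, ← add_mul, levyIncrement_add_levyIncrement_neg hx hu,
      show -(1 + α) = -1 - α by ring]
    ring
  rw [setIntegral_congr_fun measurableSet_Ioi hsym, integral_div,
    integral_Ioi_max_sub_max_mul_rpow hα hα1 (by linarith [hx.1]) (by linarith [hx.2]), div_div,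
    mul_comm (α * (1 - α))]

section Profile

variable {q x : ℝ}

lemma hasDerivAt_one_sub_rpow (hx : x < 1) :
    HasDerivAt (fun y => (1 - y) ^ q) (-(q * (1 - x) ^ (q - 1))) x := by
  have h := ((hasDerivAt_id x).const_sub 1).rpow_const (p := q) (Or.inl (sub_pos.mpr hx).ne')
  simpa using h

lemma hasDerivAt_one_add_rpow (hx : -1 < x) :
    HasDerivAt (fun y => (1 + y) ^ q) (q * (1 + x) ^ (q - 1)) x := by
  have h := ((hasDerivAt_id x).const_add 1).rpow_const (p := q)
    (Or.inl (by simp only [id]; linarith : (1 + id x) ≠ 0))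
  simpa using h

lemma hasDerivAt_rpowProfile (K L M : ℝ) (hx : x ∈ Ioo (-1) 1) :
    HasDerivAt (fun y => K * ((1 - y) ^ q - (1 + y) ^ q) + L * y + M)
      (-(K * q) * ((1 - x) ^ (q - 1) + (1 + x) ^ (q - 1)) + L) x := by
  have h := ((((hasDerivAt_one_sub_rpow (q := q) hx.2).sub
    (hasDerivAt_one_add_rpow (q := q) hx.1)).const_mul K).add
    ((hasDerivAt_id x).const_mul L)).add_const M
  exact h.congr_deriv (by ring)

lemma deriv_rpowProfile_eventuallyEq (K L M : ℝ) (hx : x ∈ Ioo (-1) 1) :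
    deriv (fun y => K * ((1 - y) ^ q - (1 + y) ^ q) + L * y + M)
      =ᶠ[𝓝 x] fun y => -(K * q) * ((1 - y) ^ (q - 1) + (1 + y) ^ (q - 1)) + L :=
  eventually_of_mem (isOpen_Ioo.mem_nhds hx) fun _ hy => (hasDerivAt_rpowProfile K L M hy).deriv

lemma hasDerivAt_deriv_rpowProfile (K L M : ℝ) (hx : x ∈ Ioo (-1) 1) :
    HasDerivAt (deriv fun y => K * ((1 - y) ^ q - (1 + y) ^ q) + L * y + M)
      (K * q * (q - 1) * ((1 - x) ^ (q - 2) - (1 + x) ^ (q - 2))) x := by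
  refine HasDerivAt.congr_of_eventuallyEq ?_ (deriv_rpowProfile_eventuallyEq K L M hx)
  have h := (((hasDerivAt_one_sub_rpow (q := q - 1) hx.2).add
    (hasDerivAt_one_add_rpow (q := q - 1) hx.1)).const_mul (-(K * q))).add_const L
  exact h.congr_deriv (by rw [show q - 1 - 1 = q - 2 by ring]; ring)

end Profile

theorem explicit_first_order_corrector_general (α c : ℝ) (hα : 0 < α) (hα2 : α < 2)
    (hα1 : α ≠ 1) :
    let p₀ : ℝ → ℝ := fun x => if x ≤ -1 then 0 else if x < 1 then (x + 1) / 2 else 1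
    let g : ℝ → ℝ := fun x =>
      ∫ u in {(0 : ℝ)}ᶜ, (p₀ (x + u) - p₀ x - (if |u| ≤ 1 then u / 2 else 0)) *
        (c * |u| ^ (-(1 + α)))
    let p₁ : ℝ → ℝ := fun x =>
      (c / ((-α) * (1 - α) * (2 - α) * (3 - α))) *
        ((1 - x) ^ (3 - α) - 2 ^ (3 - α) + (3 - α) * 2 ^ (2 - α) * (x + 1)
          - (1 + x) ^ (3 - α))
      - ((x + 1) / 2) * (c / ((-α) * (2 - α) * (3 - α))) * 2 ^ (3 - α)
      + (x + 1) / 2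
    p₁ (-1) = 0 ∧ p₁ 1 = 1 ∧
    ∀ x ∈ Set.Ioo (-1 : ℝ) 1,
      DifferentiableAt ℝ p₁ x ∧ DifferentiableAt ℝ (deriv p₁) x ∧
      (1 / 2) * deriv (deriv p₁) x + g x = 0 := by
  intro p₀ g p₁
  have h1α : 1 - α ≠ 0 := sub_ne_zero.mpr (Ne.symm hα1)
  have h2α : 2 - α ≠ 0 := by linarith
  have h3α : 3 - α ≠ 0 := by linarith
  set K := c / ((-α) * (1 - α) * (2 - α) * (3 - α))
  set L := K * (3 - α) * 2 ^ (2 - α) - c / ((-α) * (2 - α) * (3 - α)) * 2 ^ (3 - α) / 2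
    + 1 / 2
  have hp₁ : p₁ = fun y => K * ((1 - y) ^ (3 - α) - (1 + y) ^ (3 - α)) + L * y
      + (L - K * 2 ^ (3 - α)) := by
    funext y
    simp only [p₁]
    ring
  have h2pow : (2 : ℝ) ^ (3 - α) = 2 * 2 ^ (2 - α) := by
    rw [show 3 - α = 1 + (2 - α) by ring, Real.rpow_add two_pos, Real.rpow_one]
  refine ⟨?_, ?_, fun x hx => ?_⟩
  · rw [hp₁]
    norm_num [Real.zero_rpow h3α]
    ring
  · rw [hp₁]
    norm_num [Real.zero_rpow h3α, L, K, h2pow]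
    field_simp
    ring
  · have hD2 := hasDerivAt_deriv_rpowProfile (q := 3 - α) K L (L - K * 2 ^ (3 - α)) hx
    rw [hp₁]
    refine ⟨(hasDerivAt_rpowProfile K L _ hx).differentiableAt, hD2.differentiableAt, ?_⟩
    have hg : g x = c * (((1 - x) ^ (1 - α) - (1 + x) ^ (1 - α)) / (2 * (α * (1 - α)))) := by
      rw [← integral_levyIncrement_mul_rpow hα hα1 hx, ← integral_const_mul]
      refine integral_congr_ae (ae_of_all _ fun u => ?_)
      simp only [levyIncrement, rightExitProb, p₀]
      ring
    rw [hD2.deriv, hg, show (3:ℝ) - α - 2 = 1 - α by ring]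
    simp only [K]
    field_simp
    ring

/-- The explicit first-order corrector `p₁` for `dX = dW + ε dL^α` from `(-1,1)` to
`[1,∞)` solves `(1/2)p₁'' + g = 0` on `(-1,1)` with `p₁(-1) = 0`, `p₁(1) = 1`. -/
theorem explicit_first_order_corrector (α c : ℝ) (hα : 0 < α) (hα2 : α < 2)
    (hα1 : α ≠ 1) (hc : 0 < c) :
    let p₀ : ℝ → ℝ := fun x => if x ≤ -1 then 0 else if x < 1 then (x + 1) / 2 else 1
    let g : ℝ → ℝ := fun x =>
      ∫ u in {(0 : ℝ)}ᶜ, (p₀ (x + u) - p₀ x - (if |u| ≤ 1 then u / 2 else 0)) *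
        (c * |u| ^ (-(1 + α)))
    let p₁ : ℝ → ℝ := fun x =>
      (c / ((-α) * (1 - α) * (2 - α) * (3 - α))) *
        ((1 - x) ^ (3 - α) - 2 ^ (3 - α) + (3 - α) * 2 ^ (2 - α) * (x + 1)
          - (1 + x) ^ (3 - α))
      - ((x + 1) / 2) * (c / ((-α) * (2 - α) * (3 - α))) * 2 ^ (3 - α)
      + (x + 1) / 2
    p₁ (-1) = 0 ∧ p₁ 1 = 1 ∧
    ∀ x ∈ Set.Ioo (-1 : ℝ) 1,
      DifferentiableAt ℝ p₁ x ∧ DifferentiableAt ℝ (deriv p₁) x ∧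
      (1 / 2) * deriv (deriv p₁) x + g x = 0 :=
  explicit_first_order_corrector_general α c hα hα2 hα1
end

section
/- Let 1 < α < 2 and κ > 0. Then for every γ > 0 the function u ↦ (e^{−γu} − 1 + γu)·κ·|u|^{-(1+α)} is Lebesgue integrable on [−1,1] \ {0}, and there exists γ > 0 such that γ − ∫_{[−1,1]\{0}} (e^{−γu} − 1 + γu)·κ·|u|^{-(1+α)} du = 0. -/
/-!
Write `ψ(γ) = ∫ (e^{-γu} - 1 + γu) ν(du)`. Since `0 ≤ e^x - 1 - x ≤ x² e^{|x|}` and `ν` lives on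
`[-1, 1]` with finite second moment `∫ u² dν = κ ∫_{-1}^{1} |u|^{1-α} du`, `ψ` is continuous and
`ψ(γ) ≤ γ² e^γ ∫ u² dν`, so `ψ(γ) < γ` for small `γ`. On the negative half-line
`e^x - 1 - x ≥ x²/2` gives `ψ(γ) ≥ γ²/2 ∫_{u<0} u² dν`, so `ψ(γ) > γ` for large `γ`.
The intermediate value theorem yields a root of `ψ(γ) = γ`.
-/

open MeasureTheory Set Real

namespace Real

theorem exp_sub_one_sub_le_mul_exp_sub_one (x : ℝ) : exp x - 1 - x ≤ x * (exp x - 1) := by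
  have h : (1 - x) * exp x ≤ 1 := by
    have := mul_le_mul_of_nonneg_right (by linarith [add_one_le_exp (-x)] : 1 - x ≤ exp (-x))
      (exp_pos x).le
    rwa [← exp_add, neg_add_cancel, exp_zero] at this
  linarith

theorem mul_exp_sub_one_le_sq_mul_exp_abs (x : ℝ) : x * (exp x - 1) ≤ x ^ 2 * exp |x| := by
  rcases le_total 0 x with hx | hx
  · rw [abs_of_nonneg hx]
    nlinarith [exp_sub_one_sub_le_mul_exp_sub_one x, add_one_le_exp x]
  · rw [abs_of_nonpos hx]
    nlinarith [add_one_le_exp x, one_le_exp (neg_nonneg.2 hx)]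

theorem exp_sub_one_sub_le_sq_mul_exp_abs (x : ℝ) : exp x - 1 - x ≤ x ^ 2 * exp |x| :=
  (exp_sub_one_sub_le_mul_exp_sub_one x).trans (mul_exp_sub_one_le_sq_mul_exp_abs x)

end Real

noncomputable def levyKernel (γ u : ℝ) : ℝ :=
  exp (-γ * u) - 1 + γ * u

section LevyKernel

variable {γ u : ℝ}

theorem levyKernel_nonneg (γ u : ℝ) : 0 ≤ levyKernel γ u := by
  rw [levyKernel]
  linarith [add_one_le_exp (-γ * u)]

theorem levyKernel_le {R : ℝ} (hγ : |γ| ≤ R) (hu : |u| ≤ 1) :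
    levyKernel γ u ≤ R ^ 2 * exp R * u ^ 2 := by
  have habs : |-γ * u| ≤ R := by
    rw [abs_mul, abs_neg]
    nlinarith [abs_nonneg γ, abs_nonneg u]
  calc levyKernel γ u = exp (-γ * u) - 1 - -γ * u := by rw [levyKernel]; ring
    _ ≤ (-γ * u) ^ 2 * exp |-γ * u| := exp_sub_one_sub_le_sq_mul_exp_abs _
    _ = |γ| ^ 2 * exp |-γ * u| * u ^ 2 := by rw [sq_abs]; ring
    _ ≤ R ^ 2 * exp R * u ^ 2 := by gcongr

theorem sq_mul_sq_div_two_le_levyKernel (hγ : 0 ≤ γ) (hu : u ≤ 0) :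
    γ ^ 2 * u ^ 2 / 2 ≤ levyKernel γ u := by
  rw [levyKernel]
  nlinarith [quadratic_le_exp_of_nonneg (mul_nonneg_of_nonpos_of_nonpos (neg_nonpos.2 hγ) hu)]

theorem continuous_levyKernel_left (u : ℝ) : Continuous fun γ => levyKernel γ u := by
  unfold levyKernel
  fun_prop

theorem continuous_levyKernel_right (γ : ℝ) : Continuous (levyKernel γ) := by
  unfold levyKernel
  fun_prop

end LevyKernel

noncomputable def laplaceExponent (ν : Measure ℝ) (γ : ℝ) : ℝ :=
  ∫ u, levyKernel γ u ∂ν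

section LaplaceExponent

variable {ν : Measure ℝ}

theorem integrable_levyKernel (hν : ∀ᵐ u ∂ν, |u| ≤ 1) (h2 : Integrable (fun u => u ^ 2) ν)
    (γ : ℝ) : Integrable (levyKernel γ) ν := by
  refine (h2.const_mul (|γ| ^ 2 * exp |γ|)).mono'
    (continuous_levyKernel_right γ).aestronglyMeasurable ?_
  filter_upwards [hν] with u hu
  rw [norm_of_nonneg (levyKernel_nonneg γ u)]
  exact levyKernel_le le_rfl hu

theorem continuous_laplaceExponent (hν : ∀ᵐ u ∂ν, |u| ≤ 1)
    (h2 : Integrable (fun u => u ^ 2) ν) : Continuous (laplaceExponent ν) := by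
  refine continuous_iff_continuousAt.2 fun γ₀ => continuousAt_of_dominated
    (bound := fun u => (|γ₀| + 1) ^ 2 * exp (|γ₀| + 1) * u ^ 2)
    (.of_forall fun γ => (integrable_levyKernel hν h2 γ).aestronglyMeasurable) ?_
    (h2.const_mul _) (.of_forall fun u => (continuous_levyKernel_left u).continuousAt)
  filter_upwards [Metric.ball_mem_nhds γ₀ one_pos] with γ hγ
  have hR : |γ| ≤ |γ₀| + 1 := by
    have := abs_sub_abs_le_abs_sub γ γ₀
    rw [Metric.mem_ball, Real.dist_eq] at hγ
    linarith
  filter_upwards [hν] with u hu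
  rw [norm_of_nonneg (levyKernel_nonneg γ u)]
  exact levyKernel_le hR hu

theorem laplaceExponent_le (hν : ∀ᵐ u ∂ν, |u| ≤ 1) (h2 : Integrable (fun u => u ^ 2) ν)
    (γ : ℝ) : laplaceExponent ν γ ≤ |γ| ^ 2 * exp |γ| * ∫ u, u ^ 2 ∂ν := by
  rw [← integral_const_mul]
  refine integral_mono_ae (integrable_levyKernel hν h2 γ) (h2.const_mul _) ?_
  filter_upwards [hν] with u hu
  exact levyKernel_le le_rfl hu

theorem le_laplaceExponent (hν : ∀ᵐ u ∂ν, |u| ≤ 1) (h2 : Integrable (fun u => u ^ 2) ν)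
    {γ : ℝ} (hγ : 0 ≤ γ) : γ ^ 2 / 2 * ∫ u in Iio 0, u ^ 2 ∂ν ≤ laplaceExponent ν γ := by
  rw [← integral_const_mul]
  calc ∫ u in Iio 0, γ ^ 2 / 2 * u ^ 2 ∂ν
      ≤ ∫ u in Iio 0, levyKernel γ u ∂ν := by
        refine setIntegral_mono_on (h2.const_mul _).integrableOn
          (integrable_levyKernel hν h2 γ).integrableOn measurableSet_Iio fun u hu => ?_
        linarith [sq_mul_sq_div_two_le_levyKernel hγ (le_of_lt hu)]
    _ ≤ laplaceExponent ν γ :=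
        setIntegral_le_integral (integrable_levyKernel hν h2 γ)
          (.of_forall fun u => levyKernel_nonneg γ u)

theorem setIntegral_Iio_sq_pos (h2 : Integrable (fun u => u ^ 2) ν) (hneg : 0 < ν (Iio 0)) :
    0 < ∫ u in Iio 0, u ^ 2 ∂ν := by
  rw [setIntegral_pos_iff_support_of_nonneg_ae (.of_forall fun u => sq_nonneg u) h2.integrableOn]
  convert hneg using 2
  ext u
  simp only [mem_inter_iff, Function.mem_support, mem_Iio]
  exact ⟨fun h => h.2, fun h => ⟨pow_ne_zero 2 h.ne, h⟩⟩

theorem exists_laplaceExponent_eq_self (hν : ∀ᵐ u ∂ν, |u| ≤ 1)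
    (h2 : Integrable (fun u => u ^ 2) ν) (hneg : 0 < ν (Iio 0)) :
    ∃ γ, 0 < γ ∧ laplaceExponent ν γ = γ := by
  set M := ∫ u, u ^ 2 ∂ν
  set m := ∫ u in Iio 0, u ^ 2 ∂ν
  have hM : 0 ≤ M := integral_nonneg fun u => sq_nonneg u
  have hm : 0 < m := setIntegral_Iio_sq_pos h2 hneg
  set γ₀ := 1 / (exp 1 * M + 1)
  have hγ₀ : 0 < γ₀ := by positivity
  have hγ₀_le : γ₀ ≤ 1 := div_le_one_of_le₀ (by nlinarith [exp_pos 1]) (by positivity)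
  have hsmall : laplaceExponent ν γ₀ ≤ γ₀ := by
    have hγ₀M : γ₀ * (exp 1 * M) ≤ 1 := by
      rw [div_mul_eq_mul_div, one_mul, div_le_one (by positivity)]
      linarith
    calc laplaceExponent ν γ₀ ≤ γ₀ ^ 2 * exp γ₀ * M := by
          simpa [abs_of_pos hγ₀] using laplaceExponent_le hν h2 γ₀
      _ ≤ γ₀ ^ 2 * exp 1 * M := by gcongr
      _ = γ₀ * (γ₀ * (exp 1 * M)) := by ring
      _ ≤ γ₀ := mul_le_of_le_one_right hγ₀.le hγ₀M
  set γ₁ := 4 / m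
  have hγ₁ : 0 < γ₁ := by positivity
  have hlarge : γ₁ ≤ laplaceExponent ν γ₁ := by
    refine le_trans ?_ (le_laplaceExponent hν h2 hγ₁.le)
    have h4 : γ₁ * m = 4 := div_mul_cancel₀ 4 hm.ne'
    nlinarith
  exact isPreconnected_Ioi.intermediate_value₂ hγ₀ hγ₁
    (continuous_laplaceExponent hν h2).continuousOn continuousOn_id hsmall hlarge

end LaplaceExponent

theorem intervalIntegrable_abs_rpow {r : ℝ} (hr : -1 < r) (a b : ℝ) :
    IntervalIntegrable (fun u => |u| ^ r) volume a b := by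
  have hpos : ∀ c, 0 ≤ c → IntervalIntegrable (fun u => |u| ^ r) volume 0 c := by
    intro c hc
    refine (intervalIntegral.intervalIntegrable_rpow' hr).congr_ae ?_
    rw [uIoc_of_le hc]
    filter_upwards [ae_restrict_mem measurableSet_Ioc] with u hu
    rw [abs_of_pos hu.1]
  have hzero : ∀ c, IntervalIntegrable (fun u => |u| ^ r) volume 0 c := by
    intro c
    rcases le_total 0 c with hc | hc
    · exact hpos c hc
    · rw [IntervalIntegrable.iff_comp_neg]
      simpa only [abs_neg, neg_zero] using hpos (-c) (neg_nonneg.2 hc)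
  exact (hzero a).symm.trans (hzero b)

noncomputable def truncatedStableLevyMeasure (κ α : ℝ) : Measure ℝ :=
  (volume.restrict (Icc (-1) 1 \ {0})).withDensity fun u => ENNReal.ofReal (κ * |u| ^ (-(1 + α)))

section TruncatedStable

variable {κ α : ℝ}

private theorem stableDensity_toNNReal_smul (hκ : 0 ≤ κ) (g : ℝ → ℝ) :
    (fun u => (κ * |u| ^ (-(1 + α))).toNNReal • g u) = fun u => g u * (κ * |u| ^ (-(1 + α))) := by
  ext u
  rw [NNReal.smul_def, smul_eq_mul, Real.coe_toNNReal _ (by positivity), mul_comm]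

theorem integrable_truncatedStableLevyMeasure_iff (hκ : 0 ≤ κ) {g : ℝ → ℝ} :
    Integrable g (truncatedStableLevyMeasure κ α) ↔
      Integrable (fun u => g u * (κ * |u| ^ (-(1 + α))))
        ((volume : Measure ℝ).restrict (Icc (-1) 1 \ {0})) := by
  rw [← stableDensity_toNNReal_smul hκ]
  exact integrable_withDensity_iff_integrable_smul (by fun_prop)

theorem integral_truncatedStableLevyMeasure (hκ : 0 ≤ κ) (g : ℝ → ℝ) :
    ∫ u, g u ∂truncatedStableLevyMeasure κ α =
      ∫ u in Icc (-1) 1 \ {0}, g u * (κ * |u| ^ (-(1 + α))) := by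
  rw [← stableDensity_toNNReal_smul hκ]
  exact integral_withDensity_eq_integral_smul (by fun_prop) g

theorem ae_abs_le_one_truncatedStableLevyMeasure :
    ∀ᵐ u ∂truncatedStableLevyMeasure κ α, |u| ≤ 1 := by
  refine (withDensity_absolutelyContinuous _ _).ae_le ?_
  filter_upwards [ae_restrict_mem (measurableSet_Icc.diff (measurableSet_singleton 0))] with u hu
  exact abs_le.2 hu.1

theorem integrable_sq_truncatedStableLevyMeasure (hκ : 0 ≤ κ) (hα : α < 2) :
    Integrable (fun u => u ^ 2) (truncatedStableLevyMeasure κ α) := by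
  rw [integrable_truncatedStableLevyMeasure_iff hκ]
  have hint : IntegrableOn (fun u => κ * |u| ^ (1 - α)) (Icc (-1) 1 \ {0}) :=
    ((intervalIntegrable_iff_integrableOn_Icc_of_le (by norm_num)).1
      ((intervalIntegrable_abs_rpow (r := 1 - α) (by linarith) (-1) 1).const_mul κ)).mono_set
      sdiff_subset
  refine hint.congr_fun (fun u hu => ?_) (measurableSet_Icc.diff (measurableSet_singleton 0))
  have hu0 : 0 < |u| := abs_pos.2 hu.2
  beta_reduce
  rw [← sq_abs, show 1 - α = 2 + -(1 + α) by ring, rpow_add hu0, rpow_two]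
  ring

theorem truncatedStableLevyMeasure_Iio_pos (hκ : 0 < κ) :
    0 < truncatedStableLevyMeasure κ α (Iio 0) := by
  rw [truncatedStableLevyMeasure, withDensity_apply _ measurableSet_Iio,
    setLIntegral_pos_iff (by fun_prop)]
  have hS : Ioo (-1) 0 ⊆ Icc (-1 : ℝ) 1 \ {0} := fun u hu =>
    ⟨⟨hu.1.le, by linarith [hu.2]⟩, hu.2.ne⟩
  have hsupp : Ioo (-1) 0 ⊆ Function.support (fun u => ENNReal.ofReal (κ * |u| ^ (-(1 + α)))) ∩
      Iio 0 := fun u hu =>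
    ⟨ne_of_gt (ENNReal.ofReal_pos.2 (mul_pos hκ (rpow_pos_of_pos (abs_pos.2 hu.2.ne) _))), hu.2⟩
  calc (0 : ENNReal) < volume (Ioo (-1 : ℝ) 0) := by simp
    _ = (volume.restrict (Icc (-1) 1 \ {0})) (Ioo (-1 : ℝ) 0) := by
      rw [Measure.restrict_apply measurableSet_Ioo, inter_eq_left.2 hS]
    _ ≤ _ := measure_mono hsupp

end TruncatedStable

theorem decay_rate_equation_general (α κ : ℝ) (hα2 : α < 2) (hκ : 0 < κ) :
    (∀ γ : ℝ, 0 < γ →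
      Integrable (fun u => (Real.exp (-γ * u) - 1 + γ * u) * (κ * |u| ^ (-(1 + α))))
        ((volume : Measure ℝ).restrict (Set.Icc (-1 : ℝ) 1 \ {0}))) ∧
    ∃ γ : ℝ, 0 < γ ∧
      γ - ∫ u in (Set.Icc (-1 : ℝ) 1 \ {0}),
        (Real.exp (-γ * u) - 1 + γ * u) * (κ * |u| ^ (-(1 + α))) = 0 := by
  have hν := ae_abs_le_one_truncatedStableLevyMeasure (κ := κ) (α := α)
  have h2 := integrable_sq_truncatedStableLevyMeasure hκ.le hα2
  refine ⟨fun γ _ => (integrable_truncatedStableLevyMeasure_iff hκ.le).1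
    (integrable_levyKernel hν h2 γ), ?_⟩
  obtain ⟨γ, hγ, hψ⟩ :=
    exists_laplaceExponent_eq_self hν h2 (truncatedStableLevyMeasure_Iio_pos hκ)
  exact ⟨γ, hγ, sub_eq_zero.2 (hψ.symm.trans (integral_truncatedStableLevyMeasure hκ.le _))⟩

/-- For the truncated Lévy measure `ν(du) = κ|u|^{-(1+α)} 1_{|u|≤1} du` with `1 < α < 2`,
the integrand of the decay-rate equation is integrable for each `γ > 0`, and there is a
`γ > 0` solving `γ = ∫_{[-1,1]\{0}} (e^{-γu} - 1 + γu) κ|u|^{-(1+α)} du`. -/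
theorem decay_rate_equation (α κ : ℝ) (hα1 : 1 < α) (hα2 : α < 2) (hκ : 0 < κ) :
    (∀ γ : ℝ, 0 < γ →
      Integrable (fun u => (Real.exp (-γ * u) - 1 + γ * u) * (κ * |u| ^ (-(1 + α))))
        ((volume : Measure ℝ).restrict (Set.Icc (-1 : ℝ) 1 \ {0}))) ∧
    ∃ γ : ℝ, 0 < γ ∧
      γ - ∫ u in (Set.Icc (-1 : ℝ) 1 \ {0}),
        (Real.exp (-γ * u) - 1 + γ * u) * (κ * |u| ^ (-(1 + α))) = 0 :=
  decay_rate_equation_general α κ hα2 hκ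
end

section
/- Let 1 < α < 2, κ > 0, and let γ > 0 satisfy γ = ∫_{[−1,1]\{0}} (e^{−γu} − 1 + γu)·κ·|u|^{-(1+α)} du. Define F : ℝ → ℝ by F(ξ) = 1 − e^{−γξ} for ξ > 0 and F(ξ) = 0 for ξ ≤ 0. Then: (i) F(ξ) = 0 for all ξ ≤ 0; (ii) F(ξ) → 1 as ξ → ∞; (iii) for every ξ > 1, F is differentiable at ξ, the function u ↦ (F(ξ+u) − F(ξ) − F'(ξ)u)·κ·|u|^{-(1+α)} is Lebesgue integrable on [−1,1] \ {0}, and F'(ξ) + ∫_{[−1,1]\{0}} (F(ξ+u) − F(ξ) − F'(ξ)u)·κ·|u|^{-(1+α)} du = 0. -/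
/-!
For `ξ > 0` and `ξ + u > 0` the exponential ansatz turns the compensated increment
`F(ξ+u) - F(ξ) - F'(ξ)u` into `-e^{-γξ} (e^{-γu} - 1 + γu)`, so the nonlocal term of the layer
equation is `-e^{-γξ}` times the integral defining `γ`, which cancels `F'(ξ) = γ e^{-γξ}`.
-/

open MeasureTheory Real Filter Topology Set

noncomputable def boundaryLayer (γ ξ : ℝ) : ℝ :=
  if 0 < ξ then 1 - exp (-γ * ξ) else 0

section BoundaryLayer

variable {γ ξ : ℝ}

theorem hasDerivAt_one_sub_exp_neg_mul (γ x : ℝ) :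
    HasDerivAt (fun y => 1 - exp (-γ * y)) (γ * exp (-γ * x)) x := by
  have h := (((hasDerivAt_id x).const_mul (-γ)).exp).const_sub 1
  simp only [id, mul_one, mul_neg, neg_neg] at h
  rwa [mul_comm] at h

theorem boundaryLayer_of_nonpos (hξ : ξ ≤ 0) : boundaryLayer γ ξ = 0 :=
  if_neg hξ.not_gt

theorem boundaryLayer_of_pos (hξ : 0 < ξ) : boundaryLayer γ ξ = 1 - exp (-γ * ξ) :=
  if_pos hξ

theorem boundaryLayer_eventuallyEq (hξ : 0 < ξ) :
    boundaryLayer γ =ᶠ[𝓝 ξ] fun y => 1 - exp (-γ * y) := by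
  filter_upwards [Ioi_mem_nhds hξ] with y hy
  exact boundaryLayer_of_pos hy

theorem hasDerivAt_boundaryLayer (hξ : 0 < ξ) :
    HasDerivAt (boundaryLayer γ) (γ * exp (-γ * ξ)) ξ :=
  (hasDerivAt_one_sub_exp_neg_mul γ ξ).congr_of_eventuallyEq (boundaryLayer_eventuallyEq hξ)

theorem tendsto_boundaryLayer_atTop (hγ : 0 < γ) :
    Tendsto (boundaryLayer γ) atTop (𝓝 1) := by
  have hexp : Tendsto (fun ξ => exp (-γ * ξ)) atTop (𝓝 0) :=
    tendsto_exp_atBot.comp (tendsto_id.const_mul_atTop_of_neg (neg_neg_of_pos hγ))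
  have hlim : Tendsto (fun ξ => 1 - exp (-γ * ξ)) atTop (𝓝 1) := by
    simpa using hexp.const_sub 1
  refine hlim.congr' ?_
  filter_upwards [eventually_gt_atTop 0] with ξ hξ
  exact (boundaryLayer_of_pos hξ).symm

theorem boundaryLayer_compensated_increment {u : ℝ} (hξ : 0 < ξ) (hξu : 0 < ξ + u) :
    boundaryLayer γ (ξ + u) - boundaryLayer γ ξ - deriv (boundaryLayer γ) ξ * u =
      -exp (-γ * ξ) * (exp (-γ * u) - 1 + γ * u) := by
  have hexp : exp (-γ * (ξ + u)) = exp (-γ * ξ) * exp (-γ * u) := by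
    rw [← exp_add]; ring_nf
  rw [boundaryLayer_of_pos hξu, boundaryLayer_of_pos hξ, (hasDerivAt_boundaryLayer hξ).deriv,
    hexp]
  ring

/-- The nonlocal term of the layer equation for the Lévy measure `w u · μ(du)`. -/
theorem integral_boundaryLayer_compensated_increment {μ : Measure ℝ} {w : ℝ → ℝ}
    (hξ : 0 < ξ) (hμ : ∀ᵐ u ∂μ, -ξ < u)
    (hint : Integrable (fun u => (exp (-γ * u) - 1 + γ * u) * w u) μ) :
    Integrable (fun u =>
        (boundaryLayer γ (ξ + u) - boundaryLayer γ ξ - deriv (boundaryLayer γ) ξ * u) * w u) μ ∧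
      ∫ u, (boundaryLayer γ (ξ + u) - boundaryLayer γ ξ - deriv (boundaryLayer γ) ξ * u) * w u ∂μ
        = -exp (-γ * ξ) * ∫ u, (exp (-γ * u) - 1 + γ * u) * w u ∂μ := by
  have hae : (fun u =>
      (boundaryLayer γ (ξ + u) - boundaryLayer γ ξ - deriv (boundaryLayer γ) ξ * u) * w u)
      =ᵐ[μ] fun u => -exp (-γ * ξ) * ((exp (-γ * u) - 1 + γ * u) * w u) := by
    filter_upwards [hμ] with u hu
    rw [boundaryLayer_compensated_increment hξ (by linarith), mul_assoc]
  refine ⟨(hint.const_mul _).congr hae.symm, ?_⟩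
  rw [integral_congr_ae hae, integral_const_mul]

end BoundaryLayer

theorem boundary_layer_left_general (α κ γ : ℝ)
    (hγ : 0 < γ)
    (hγeq : γ = ∫ u in (Set.Icc (-1 : ℝ) 1 \ {0}),
      (Real.exp (-γ * u) - 1 + γ * u) * (κ * |u| ^ (-(1 + α)))) :
    let F : ℝ → ℝ := fun ξ => if 0 < ξ then 1 - Real.exp (-γ * ξ) else 0
    (∀ ξ : ℝ, ξ ≤ 0 → F ξ = 0) ∧
    Filter.Tendsto F Filter.atTop (nhds 1) ∧
    ∀ ξ : ℝ, 1 < ξ →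
      DifferentiableAt ℝ F ξ ∧
      Integrable (fun u => (F (ξ + u) - F ξ - deriv F ξ * u) * (κ * |u| ^ (-(1 + α))))
        ((volume : Measure ℝ).restrict (Set.Icc (-1 : ℝ) 1 \ {0})) ∧
      deriv F ξ + ∫ u in (Set.Icc (-1 : ℝ) 1 \ {0}),
        (F (ξ + u) - F ξ - deriv F ξ * u) * (κ * |u| ^ (-(1 + α))) = 0 := by
  intro F
  rw [show F = boundaryLayer γ from rfl]
  -- if the integral defining `γ` were the junk value `0` of a non-integrable function, `γ = 0`
  have hint : IntegrableOn (fun u => (exp (-γ * u) - 1 + γ * u) * (κ * |u| ^ (-(1 + α))))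
      (Icc (-1) 1 \ {0}) :=
    .of_integral_ne_zero (hγeq ▸ hγ.ne')
  refine ⟨fun ξ => boundaryLayer_of_nonpos, tendsto_boundaryLayer_atTop hγ, fun ξ hξ => ?_⟩
  have hξ0 : 0 < ξ := one_pos.trans hξ
  have hsupp : ∀ᵐ u ∂volume.restrict (Icc (-1 : ℝ) 1 \ {0}), -ξ < u :=
    ae_restrict_of_forall_mem (measurableSet_Icc.diff (measurableSet_singleton 0))
      fun u hu => by linarith [hu.1.1]
  obtain ⟨hintF, hintegral⟩ := integral_boundaryLayer_compensated_increment hξ0 hsupp hint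
  refine ⟨(hasDerivAt_boundaryLayer hξ0).differentiableAt, hintF, ?_⟩
  rw [hintegral, ← hγeq, (hasDerivAt_boundaryLayer hξ0).deriv]
  ring

/-- The boundary layer function `F(ξ) = 1 - e^{-γξ}` (for `ξ > 0`, `F = 0` for `ξ ≤ 0`)
satisfies the boundary condition, the matching condition, and (for `ξ > 1`) the layer
equation `F'(ξ) + ∫ (F(ξ+u) - F(ξ) - F'(ξ)u) ν(du) = 0` with the truncated Lévy measure. -/
theorem boundary_layer_left (α κ γ : ℝ) (hα1 : 1 < α) (hα2 : α < 2) (hκ : 0 < κ)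
    (hγ : 0 < γ)
    (hγeq : γ = ∫ u in (Set.Icc (-1 : ℝ) 1 \ {0}),
      (Real.exp (-γ * u) - 1 + γ * u) * (κ * |u| ^ (-(1 + α)))) :
    let F : ℝ → ℝ := fun ξ => if 0 < ξ then 1 - Real.exp (-γ * ξ) else 0
    (∀ ξ : ℝ, ξ ≤ 0 → F ξ = 0) ∧
    Filter.Tendsto F Filter.atTop (nhds 1) ∧
    ∀ ξ : ℝ, 1 < ξ →
      DifferentiableAt ℝ F ξ ∧
      Integrable (fun u => (F (ξ + u) - F ξ - deriv F ξ * u) * (κ * |u| ^ (-(1 + α))))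
        ((volume : Measure ℝ).restrict (Set.Icc (-1 : ℝ) 1 \ {0})) ∧
      deriv F ξ + ∫ u in (Set.Icc (-1 : ℝ) 1 \ {0}),
        (F (ξ + u) - F ξ - deriv F ξ * u) * (κ * |u| ^ (-(1 + α))) = 0 :=
  boundary_layer_left_general α κ γ hγ hγeq
end

section
/- Let 1 < α < 2, κ > 0, and let γ > 0 satisfy γ = ∫_{[−1,1]\{0}} (e^{−γu} − 1 + γu)·κ·|u|^{-(1+α)} du. Define G : ℝ → ℝ by G(ς) = e^{−γς} for ς > 0 and G(ς) = 1 for ς ≤ 0. Then: (i) G(ς) = 1 for all ς ≤ 0; (ii) G(ς) → 0 as ς → ∞; (iii) G(x) = 1 − F(x) for all x ∈ ℝ, where F(ξ) = 1 − e^{−γξ} for ξ > 0 and F(ξ) = 0 for ξ ≤ 0; (iv) for every ς > 1, G is differentiable at ς, the function u ↦ (G(ς+u) − G(ς) − G'(ς)u)·κ·|u|^{-(1+α)} is Lebesgue integrable on [−1,1] \ {0}, and G'(ς) + ∫_{[−1,1]\{0}} (G(ς+u) − G(ς) − G'(ς)u)·κ·|u|^{-(1+α)} du = 0. -/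
open MeasureTheory

/-!
For `ς > 1` the whole window `ς + u`, `|u| ≤ 1`, lies where `G` is the exponential, so the
compensated increment factorises as `G(ς+u) - G(ς) - G'(ς)u = e^{-γς} (e^{-γu} - 1 + γu)`.
The layer integral is therefore `e^{-γς}` times the integral defining `γ`, and cancels
`G'(ς) = -γ e^{-γς}`. The integrand is integrable because `|e^{-γu} - 1 + γu| ≤ C u²` near `0`,
which turns the singularity `|u|^{-(1+α)}` into the integrable `|u|^{1-α}` for `α < 2`.
-/

open Real Set Filter

theorem Real.abs_exp_sub_one_sub_le_sq_mul_exp_abs (x : ℝ) :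
    |exp x - 1 - x| ≤ x ^ 2 * exp |x| := by
  have h := Complex.norm_exp_sub_sum_le_norm_mul_exp (x : ℂ) 2
  norm_num [Finset.sum_range_succ, ← sub_sub] at h
  rw [← Real.norm_eq_abs]
  exact_mod_cast h

theorem integrableOn_ball_mul_abs_rpow_of_abs_le_sq {f : ℝ → ℝ} (hf : Measurable f)
    {C α r : ℝ} (hα : α < 2) (hfC : ∀ u, |u| < r → |f u| ≤ C * u ^ 2) :
    IntegrableOn (fun u => f u * |u| ^ (-(1 + α))) (Metric.ball 0 r) := by
  refine integrableOn_ball_of_norm_le_rpow (C := C) (α := α - 1) (by simp) (by simp; linarith)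
    ?_ (by fun_prop)
  filter_upwards [ae_restrict_mem Metric.isOpen_ball.measurableSet,
    ae_restrict_of_ae (Measure.ae_ne volume 0)] with u hu hu0
  have hpos : 0 < |u| := abs_pos.mpr hu0
  rw [mem_ball_zero_iff, Real.norm_eq_abs] at hu
  calc ‖f u * |u| ^ (-(1 + α))‖ = |f u| * |u| ^ (-(1 + α)) := by
        rw [Real.norm_eq_abs, abs_mul, abs_of_nonneg (by positivity : 0 ≤ |u| ^ (-(1 + α)))]
    _ ≤ C * |u| ^ (2 : ℝ) * |u| ^ (-(1 + α)) := by
        rw [rpow_two, sq_abs]; gcongr; exact hfC u hu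
    _ = C * ‖u‖ ^ (-(α - 1)) := by
        rw [mul_assoc, ← rpow_add hpos, Real.norm_eq_abs]; ring_nf

theorem integrableOn_levyIntegrand_exp (κ γ : ℝ) {α : ℝ} (hα : α < 2) :
    IntegrableOn (fun u => (exp (-γ * u) - 1 + γ * u) * (κ * |u| ^ (-(1 + α)))) (Icc (-1) 1) := by
  have hbound : ∀ u, |u| < 2 → |exp (-γ * u) - 1 + γ * u| ≤ γ ^ 2 * exp (2 * |γ|) * u ^ 2 := by
    intro u hu
    have h := abs_exp_sub_one_sub_le_sq_mul_exp_abs (-γ * u)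
    have hexp : exp |-γ * u| ≤ exp (2 * |γ|) := by
      rw [exp_le_exp, abs_mul, abs_neg, mul_comm 2]
      exact mul_le_mul_of_nonneg_left hu.le (abs_nonneg γ)
    calc |exp (-γ * u) - 1 + γ * u| = |exp (-γ * u) - 1 - -γ * u| := by ring_nf
      _ ≤ (-γ * u) ^ 2 * exp |-γ * u| := h
      _ ≤ (-γ * u) ^ 2 * exp (2 * |γ|) := by gcongr
      _ = γ ^ 2 * exp (2 * |γ|) * u ^ 2 := by ring
  have hball := integrableOn_ball_mul_abs_rpow_of_abs_le_sq (by fun_prop) hα hbound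
  have hsub : Icc (-1 : ℝ) 1 ⊆ Metric.ball 0 2 := fun u hu => by
    rw [mem_ball_zero_iff, norm_eq_abs, abs_lt]; constructor <;> linarith [hu.1, hu.2]
  exact (IntegrableOn.mono_set (hball.const_mul κ) hsub).congr_fun (fun u _ => by ring)
    measurableSet_Icc

noncomputable def layerProfile (γ : ℝ) : ℝ → ℝ := fun ς => if 0 < ς then exp (-γ * ς) else 1

namespace layerProfile

variable {γ ς : ℝ}

theorem of_nonpos (hς : ς ≤ 0) : layerProfile γ ς = 1 := if_neg hς.not_gt

theorem of_pos (hς : 0 < ς) : layerProfile γ ς = exp (-γ * ς) := if_pos hς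

theorem tendsto_atTop_zero (hγ : 0 < γ) : Tendsto (layerProfile γ) atTop (nhds 0) := by
  have hexp : Tendsto (fun ς => exp (-γ * ς)) atTop (nhds 0) :=
    tendsto_exp_atBot.comp (tendsto_id.const_mul_atTop_of_neg (neg_neg_iff_pos.mpr hγ))
  exact hexp.congr' (eventually_gt_atTop 0 |>.mono fun _ hς => (of_pos hς).symm)

theorem hasDerivAt (hς : 0 < ς) : HasDerivAt (layerProfile γ) (-γ * exp (-γ * ς)) ς := by
  have hexp : HasDerivAt (fun t => exp (-γ * t)) (exp (-γ * ς) * -γ) ς := by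
    simpa using ((hasDerivAt_id ς).const_mul (-γ)).exp
  refine (mul_comm (exp (-γ * ς)) (-γ) ▸ hexp).congr_of_eventuallyEq ?_
  filter_upwards [Ioi_mem_nhds hς] with t ht using of_pos ht

theorem increment_eq (hς : 0 < ς) {u : ℝ} (hu : -ς < u) :
    layerProfile γ (ς + u) - layerProfile γ ς - deriv (layerProfile γ) ς * u
      = exp (-γ * ς) * (exp (-γ * u) - 1 + γ * u) := by
  rw [of_pos (by linarith), of_pos hς, (hasDerivAt hς).deriv, mul_add, exp_add]
  ring

end layerProfile

theorem boundary_layer_right_general (α κ γ : ℝ) (hα2 : α < 2)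
    (hγ : 0 < γ)
    (hγeq : γ = ∫ u in (Set.Icc (-1 : ℝ) 1 \ {0}),
      (Real.exp (-γ * u) - 1 + γ * u) * (κ * |u| ^ (-(1 + α)))) :
    let G : ℝ → ℝ := fun ς => if 0 < ς then Real.exp (-γ * ς) else 1
    let F : ℝ → ℝ := fun ξ => if 0 < ξ then 1 - Real.exp (-γ * ξ) else 0
    (∀ ς : ℝ, ς ≤ 0 → G ς = 1) ∧
    Filter.Tendsto G Filter.atTop (nhds 0) ∧
    (∀ x : ℝ, G x = 1 - F x) ∧
    ∀ ς : ℝ, 1 < ς →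
      DifferentiableAt ℝ G ς ∧
      Integrable (fun u => (G (ς + u) - G ς - deriv G ς * u) * (κ * |u| ^ (-(1 + α))))
        ((volume : Measure ℝ).restrict (Set.Icc (-1 : ℝ) 1 \ {0})) ∧
      deriv G ς + ∫ u in (Set.Icc (-1 : ℝ) 1 \ {0}),
        (G (ς + u) - G ς - deriv G ς * u) * (κ * |u| ^ (-(1 + α))) = 0 := by
  intro G F
  refine ⟨fun _ => layerProfile.of_nonpos, layerProfile.tendsto_atTop_zero hγ,
    fun x => by by_cases hx : 0 < x <;> simp [G, F, hx], fun ς hς => ?_⟩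
  have hς0 : 0 < ς := one_pos.trans hς
  have hmeas : MeasurableSet (Icc (-1 : ℝ) 1 \ {0}) :=
    measurableSet_Icc.diff (measurableSet_singleton 0)
  have hfactor : EqOn (fun u => (G (ς + u) - G ς - deriv G ς * u) * (κ * |u| ^ (-(1 + α))))
      (fun u => exp (-γ * ς) * ((exp (-γ * u) - 1 + γ * u) * (κ * |u| ^ (-(1 + α)))))
      (Icc (-1) 1 \ {0}) := fun u hu =>
    (congrArg (· * (κ * |u| ^ (-(1 + α))))
      (layerProfile.increment_eq hς0 (by linarith [hu.1.1]))).trans (mul_assoc _ _ _)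
  have hderiv : deriv G ς = -γ * exp (-γ * ς) := (layerProfile.hasDerivAt hς0).deriv
  refine ⟨(layerProfile.hasDerivAt hς0).differentiableAt, ?_, ?_⟩
  · exact IntegrableOn.congr_fun
      (((integrableOn_levyIntegrand_exp κ γ hα2).mono_set sdiff_subset).const_mul _)
      hfactor.symm hmeas
  · rw [setIntegral_congr_fun hmeas hfactor, integral_const_mul, ← hγeq, hderiv]
    ring

/-- The boundary layer function `G(ς) = e^{-γς}` (for `ς > 0`, `G = 1` for `ς ≤ 0`)
satisfies the boundary condition, the matching condition, equals `1 - F`, and (for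
`ς > 1`) solves the layer equation with the truncated Lévy measure. -/
theorem boundary_layer_right (α κ γ : ℝ) (hα1 : 1 < α) (hα2 : α < 2) (hκ : 0 < κ)
    (hγ : 0 < γ)
    (hγeq : γ = ∫ u in (Set.Icc (-1 : ℝ) 1 \ {0}),
      (Real.exp (-γ * u) - 1 + γ * u) * (κ * |u| ^ (-(1 + α)))) :
    let G : ℝ → ℝ := fun ς => if 0 < ς then Real.exp (-γ * ς) else 1
    let F : ℝ → ℝ := fun ξ => if 0 < ξ then 1 - Real.exp (-γ * ξ) else 0
    (∀ ς : ℝ, ς ≤ 0 → G ς = 1) ∧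
    Filter.Tendsto G Filter.atTop (nhds 0) ∧
    (∀ x : ℝ, G x = 1 - F x) ∧
    ∀ ς : ℝ, 1 < ς →
      DifferentiableAt ℝ G ς ∧
      Integrable (fun u => (G (ς + u) - G ς - deriv G ς * u) * (κ * |u| ^ (-(1 + α))))
        ((volume : Measure ℝ).restrict (Set.Icc (-1 : ℝ) 1 \ {0})) ∧
      deriv G ς + ∫ u in (Set.Icc (-1 : ℝ) 1 \ {0}),
        (G (ς + u) - G ς - deriv G ς * u) * (κ * |u| ^ (-(1 + α))) = 0 :=
  boundary_layer_right_general α κ γ hα2 hγ hγeq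
end
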